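/- If the prior density γ satisfies sup |(log γ)'| ≤ Λ < ∞, then the convolution g = γ ⋆ φ with the standard normal density satisfies sup_x |g'(x)/g(x)| ≤ Λ. -/

import Mathlib

open Real MeasureTheory

noncomputable def stdNormalPDF : ℝ → ℝ :=
  fun x => (Real.sqrt (2 * Real.pi))⁻¹ * Real.exp (-x ^ 2 / 2)

lemma stdNormalPDF_pos (x : ℝ) : 0 < stdNormalPDF x := by
  unfold stdNormalPDF
  positivity

lemma stdNormalPDF_continuous : Continuous stdNormalPDF := by
  unfold stdNormalPDF; fun_prop

/-- Integrability of the gaussian times exp(c·x). -/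
lemma integrable_gauss_exp (c : ℝ) :
    Integrable (fun v : ℝ => stdNormalPDF v * Real.exp (c * v)) := by
  have h := (integrable_cexp_quadratic (b := (1/2 : ℂ)) (by norm_num) (c : ℂ) 0).norm
  have h2 : Integrable (fun v : ℝ => Real.exp (-(1/2) * v ^ 2 + c * v)) :=
    h.congr (Filter.Eventually.of_forall fun v => by
      simp only [Complex.norm_exp]
      congr 1
      simp [Complex.add_re, Complex.mul_re, Complex.ofReal_re, Complex.ofReal_im, pow_two])
  have := h2.const_mul ((Real.sqrt (2 * Real.pi))⁻¹)
  refine this.congr ?_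
  filter_upwards with v
  unfold stdNormalPDF
  rw [mul_assoc, ← Real.exp_add]
  ring_nf

lemma gauss_exp_abs_integrable (c : ℝ) :
    Integrable (fun v : ℝ => stdNormalPDF v * Real.exp (c * |v|)) := by
  have hb : Integrable (fun v : ℝ =>
      stdNormalPDF v * Real.exp (c * v) + stdNormalPDF v * Real.exp (-c * v)) :=
    (integrable_gauss_exp c).add (integrable_gauss_exp (-c))
  refine hb.mono' (stdNormalPDF_continuous.mul
      (Real.continuous_exp.comp (continuous_const.mul continuous_abs))).aestronglyMeasurable ?_
  · filter_upwards with v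
    rw [Real.norm_eq_abs, abs_of_nonneg (mul_nonneg (stdNormalPDF_pos v).le (Real.exp_pos _).le)]
    rcases le_total 0 v with h | h
    · rw [abs_of_nonneg h]
      have := (stdNormalPDF_pos v).le
      nlinarith [Real.exp_pos (-c * v), Real.exp_pos (c * v)]
    · rw [abs_of_nonpos h]
      have := (stdNormalPDF_pos v).le
      have : c * -v = -c * v := by ring
      rw [this]
      nlinarith [Real.exp_pos (-c * v), Real.exp_pos (c * v), (stdNormalPDF_pos v).le]

section main
variable (γ : ℝ → ℝ) (Λ : ℝ)
  (hγpos : ∀ x, 0 < γ x)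
  (hdiff : Differentiable ℝ γ)
  (hlogderiv : ∀ u : ℝ, |deriv γ u| ≤ Λ * γ u)

include hγpos hlogderiv in
lemma lam_nonneg : 0 ≤ Λ := by
  have h := (abs_nonneg _).trans (hlogderiv 0)
  nlinarith [hγpos 0]

include hγpos hdiff hlogderiv in
lemma grow : ∀ a b : ℝ, γ a ≤ γ b * Real.exp (Λ * |a - b|) := by
  have hΛ : 0 ≤ Λ := lam_nonneg γ Λ hγpos hlogderiv
  have hlog : ∀ u : ℝ, HasDerivAt (fun x => Real.log (γ x)) (deriv γ u / γ u) u :=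
    fun u => ((hdiff u).hasDerivAt).log (ne_of_gt (hγpos u))
  have hld : Differentiable ℝ (fun x => Real.log (γ x)) :=
    fun u => (hlog u).differentiableAt
  have hlip : LipschitzWith Λ.toNNReal (fun x => Real.log (γ x)) := by
    apply lipschitzWith_of_nnnorm_deriv_le hld
    intro u
    rw [← NNReal.coe_le_coe, coe_nnnorm, Real.coe_toNNReal _ hΛ, (hlog u).deriv,
      Real.norm_eq_abs, abs_div, abs_of_pos (hγpos u), div_le_iff₀ (hγpos u)]
    exact hlogderiv u
  intro a b
  have := hlip.dist_le_mul a b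
  rw [Real.dist_eq, Real.dist_eq, Real.coe_toNNReal _ hΛ] at this
  have h2 : Real.log (γ a) - Real.log (γ b) ≤ Λ * |a - b| :=
    (le_abs_self _).trans this
  calc γ a = Real.exp (Real.log (γ a)) := (Real.exp_log (hγpos a)).symm
    _ ≤ Real.exp (Real.log (γ b) + Λ * |a - b|) := by
        apply Real.exp_le_exp.2; linarith
    _ = γ b * Real.exp (Λ * |a - b|) := by
        rw [Real.exp_add, Real.exp_log (hγpos b)]

include hγpos hdiff hlogderiv in
lemma key_int (x₀ : ℝ) : Integrable (fun v => stdNormalPDF v * γ (x₀ - v)) := by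
  have hΛ : 0 ≤ Λ := lam_nonneg γ Λ hγpos hlogderiv
  have hgrow := grow γ Λ hγpos hdiff hlogderiv
  have hb : Integrable (fun v : ℝ =>
      γ 0 * Real.exp (Λ * |x₀|) * (stdNormalPDF v * Real.exp (Λ * |v|))) :=
    (gauss_exp_abs_integrable Λ).const_mul _
  refine hb.mono' ?_ ?_
  · exact (stdNormalPDF_continuous.mul
      (hdiff.continuous.comp (by fun_prop))).aestronglyMeasurable
  · filter_upwards with v
    rw [Real.norm_eq_abs, abs_of_nonneg
      (mul_nonneg (stdNormalPDF_pos v).le (hγpos _).le)]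
    have h1 : γ (x₀ - v) ≤ γ 0 * Real.exp (Λ * |x₀ - v - 0|) := hgrow (x₀ - v) 0
    have h2 : Real.exp (Λ * |x₀ - v - 0|) ≤ Real.exp (Λ * |x₀|) * Real.exp (Λ * |v|) := by
      rw [← Real.exp_add]
      apply Real.exp_le_exp.2
      have : |x₀ - v - 0| ≤ |x₀| + |v| := by
        rw [sub_zero]; exact (abs_sub x₀ v)
      nlinarith
    calc stdNormalPDF v * γ (x₀ - v)
        ≤ stdNormalPDF v * (γ 0 * (Real.exp (Λ * |x₀|) * Real.exp (Λ * |v|))) := by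
          refine mul_le_mul_of_nonneg_left ?_ (stdNormalPDF_pos v).le
          calc γ (x₀ - v) ≤ γ 0 * Real.exp (Λ * |x₀ - v - 0|) := h1
            _ ≤ γ 0 * (Real.exp (Λ * |x₀|) * Real.exp (Λ * |v|)) :=
              mul_le_mul_of_nonneg_left h2 (hγpos 0).le
      _ = γ 0 * Real.exp (Λ * |x₀|) * (stdNormalPDF v * Real.exp (Λ * |v|)) := by ring

end main

theorem conv_logderiv_bound
    (γ : ℝ → ℝ) (Λ : ℝ)
    (hγpos : ∀ x, 0 < γ x)
    (hγdens : ∫ x, γ x = 1)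
    (hdiff : Differentiable ℝ γ)
    (hlogderiv : ∀ u : ℝ, |deriv γ u| ≤ Λ * γ u)
    (g : ℝ → ℝ)
    (hg : ∀ x, g x = ∫ u, stdNormalPDF (x - u) * γ u) :
    ∀ x : ℝ, |deriv g x / g x| ≤ Λ := by
  have hΛ : 0 ≤ Λ := lam_nonneg γ Λ hγpos hlogderiv
  have hgrow := grow γ Λ hγpos hdiff hlogderiv
  have hint : ∀ x, Integrable (fun v => stdNormalPDF v * γ (x - v)) :=
    key_int γ Λ hγpos hdiff hlogderiv
  have hgG : ∀ x, g x = ∫ v, stdNormalPDF v * γ (x - v) := by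
    intro x
    rw [hg x, ← integral_sub_left_eq_self (fun v => stdNormalPDF v * γ (x - v)) volume x]
    simp only [sub_sub_cancel]
  have hgfun : g = fun x => ∫ v, stdNormalPDF v * γ (x - v) := funext hgG
  intro x₀
  have hbnd : ∀ᵐ (v : ℝ), ∀ x ∈ Metric.ball x₀ 1,
      ‖stdNormalPDF v * deriv γ (x - v)‖ ≤ Λ * Real.exp Λ * (stdNormalPDF v * γ (x₀ - v)) := by
    filter_upwards with v
    intro x hx
    rw [Metric.mem_ball, Real.dist_eq] at hx
    rw [Real.norm_eq_abs, abs_mul, abs_of_pos (stdNormalPDF_pos v)]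
    have h1 : |deriv γ (x - v)| ≤ Λ * γ (x - v) := hlogderiv _
    have h2 : γ (x - v) ≤ γ (x₀ - v) * Real.exp (Λ * |x - v - (x₀ - v)|) :=
      hgrow _ _
    have h3 : |x - v - (x₀ - v)| = |x - x₀| := by ring_nf
    have h4 : Real.exp (Λ * |x - v - (x₀ - v)|) ≤ Real.exp Λ := by
      apply Real.exp_le_exp.2
      rw [h3]
      nlinarith [abs_nonneg (x - x₀)]
    have hφ := (stdNormalPDF_pos v).le
    have hγ' := (hγpos (x₀ - v)).le
    calc stdNormalPDF v * |deriv γ (x - v)| ≤ stdNormalPDF v * (Λ * γ (x - v)) := by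
          exact mul_le_mul_of_nonneg_left h1 hφ
      _ ≤ stdNormalPDF v * (Λ * (γ (x₀ - v) * Real.exp Λ)) := by
          apply mul_le_mul_of_nonneg_left _ hφ
          apply mul_le_mul_of_nonneg_left _ hΛ
          calc γ (x - v) ≤ γ (x₀ - v) * Real.exp (Λ * |x - v - (x₀ - v)|) := h2
            _ ≤ γ (x₀ - v) * Real.exp Λ := mul_le_mul_of_nonneg_left h4 hγ'
      _ = Λ * Real.exp Λ * (stdNormalPDF v * γ (x₀ - v)) := by ring
  have hdF : ∀ᵐ (v : ℝ), ∀ x ∈ Metric.ball x₀ 1,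
      HasDerivAt (fun x => stdNormalPDF v * γ (x - v))
        (stdNormalPDF v * deriv γ (x - v)) x := by
    filter_upwards with v
    intro x _
    have h1 : HasDerivAt (fun x => γ (x - v)) (deriv γ (x - v)) x := by
      have := ((hdiff (x - v)).hasDerivAt).comp x ((hasDerivAt_id x).sub_const v)
      rw [mul_one] at this
      exact this
    exact h1.const_mul _
  have key := hasDerivAt_integral_of_dominated_loc_of_deriv_le
      (μ := volume) (F := fun x (v : ℝ) => stdNormalPDF v * γ (x - v))
      (F' := fun x (v : ℝ) => stdNormalPDF v * deriv γ (x - v)) (x₀ := x₀)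
      (bound := fun v => Λ * Real.exp Λ * (stdNormalPDF v * γ (x₀ - v)))
      (Metric.ball_mem_nhds x₀ one_pos)
      (Filter.Eventually.of_forall fun x =>
        (stdNormalPDF_continuous.mul
          (hdiff.continuous.comp (by fun_prop))).aestronglyMeasurable)
      (hint x₀)
      ((stdNormalPDF_continuous.measurable.mul
        ((measurable_deriv γ).comp (measurable_const.sub measurable_id))).aestronglyMeasurable)
      hbnd (((hint x₀)).const_mul _) hdF
  obtain ⟨hF'int, hderiv⟩ := key
  have hderivg : deriv g x₀ = ∫ v, stdNormalPDF v * deriv γ (x₀ - v) := by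
    rw [hgfun]; exact hderiv.deriv
  have hgpos : 0 < g x₀ := by
    rw [hgG]
    refine (integral_pos_iff_support_of_nonneg
      (fun v => mul_nonneg (stdNormalPDF_pos v).le (hγpos _).le) (hint x₀)).2 ?_
    have : Function.support (fun v => stdNormalPDF v * γ (x₀ - v)) = Set.univ :=
      Set.eq_univ_of_forall fun v =>
        ne_of_gt (mul_pos (stdNormalPDF_pos v) (hγpos _))
    rw [this]
    simp
  have habs : |deriv g x₀| ≤ Λ * g x₀ := by
    rw [hderivg, hgG, ← integral_const_mul]
    calc |∫ v, stdNormalPDF v * deriv γ (x₀ - v)|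
        ≤ ∫ v, |stdNormalPDF v * deriv γ (x₀ - v)| := by
          simpa only [Real.norm_eq_abs] using
            norm_integral_le_integral_norm (fun v => stdNormalPDF v * deriv γ (x₀ - v))
      _ ≤ ∫ v, Λ * (stdNormalPDF v * γ (x₀ - v)) := by
          refine integral_mono hF'int.abs ((hint x₀).const_mul Λ) fun v => ?_
          rw [abs_mul, abs_of_pos (stdNormalPDF_pos v)]
          calc stdNormalPDF v * |deriv γ (x₀ - v)|
              ≤ stdNormalPDF v * (Λ * γ (x₀ - v)) :=
                mul_le_mul_of_nonneg_left (hlogderiv _) (stdNormalPDF_pos v).le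
            _ = Λ * (stdNormalPDF v * γ (x₀ - v)) := by ring
  rw [abs_div, abs_of_pos hgpos, div_le_iff₀ hgpos]
  exact habs
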